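/- Let r ≥ 1 and let m_1, …, m_r and n_1, …, n_r be positive integers. The quotient of the free abelian group ℤ^r (with standard basis e_1, …, e_r) by the subgroup generated by the vectors m_1 e_1, n_i e_i − m_{i+1} e_{i+1} for i = 1, …, r−1, and n_r e_r is the trivial group if and only if gcd(m_i, n_j) = 1 for all indices with 1 ≤ i ≤ j ≤ r. -/

import Mathlib

/-- The relation vectors `m_1 e_1`, `n_i e_i − m_{i+1} e_{i+1}`
(`i = 1, …, r−1`) and `n_r e_r` in the free abelian group `ℤ^r`, where
`r = r' + 1`. -/
def relVectors (r' : ℕ) (m n : Fin (r' + 1) → ℕ) :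
    Set (Fin (r' + 1) → ℤ) :=
  {Pi.single (0 : Fin (r' + 1)) (m 0 : ℤ)} ∪
    Set.range (fun i : Fin r' =>
      Pi.single i.castSucc (n i.castSucc : ℤ) - Pi.single i.succ (m i.succ : ℤ)) ∪
    {Pi.single (Fin.last r') (n (Fin.last r') : ℤ)}

/-!
A family `x` in an abelian group with `m_1 x_1 = 0`, `n_k x_k = m_(k+1) x_(k+1)` and
`n_r x_r = 0` is the image of the basis under a homomorphism out of the quotient, so the quotient
is trivial iff every such family vanishes. Under the gcd condition, pushing `m_1 x_1 = 0` to the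
right shows that `x_k` is killed by `m_1 ⋯ m_k`, which is prime to every `n_j` with `j ≥ k`; a
downward induction from `n_r x_r = 0` then forces `x_k = 0`. Conversely, if a prime `p` divides
`m_i` and `n_j` with `i ≤ j`, take `i` as large as possible: solving the recurrences on `[i, j]`
and extending by zero gives a family in `ℤ/p` that satisfies all relations and is nonzero at `i`.
-/

open Finset

theorem eq_zero_of_nsmul_eq_zero_of_coprime {G : Type*} [AddCommGroup G] {a b : ℕ} {x : G}
    (hab : a.Coprime b) (ha : a • x = 0) (hb : b • x = 0) : x = 0 :=
  AddMonoid.addOrderOf_eq_one_iff.mp <| Nat.eq_one_of_dvd_coprimes hab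
    (addOrderOf_dvd_of_nsmul_eq_zero ha) (addOrderOf_dvd_of_nsmul_eq_zero hb)

variable {r' : ℕ} {m n : Fin (r' + 1) → ℕ}

structure SatisfiesRelations {G : Type*} [AddCommGroup G] (m n : Fin (r' + 1) → ℕ)
    (x : Fin (r' + 1) → G) : Prop where
  left : m 0 • x 0 = 0
  step : ∀ i : Fin r', n i.castSucc • x i.castSucc = m i.succ • x i.succ
  right : n (Fin.last r') • x (Fin.last r') = 0

theorem satisfiesRelations_mk_single (m n : Fin (r' + 1) → ℕ) :
    SatisfiesRelations m n fun k =>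
      (QuotientAddGroup.mk (Pi.single k 1) : _ ⧸ AddSubgroup.closure (relVectors r' m n)) := by
  have hmk {v} (hv : v ∈ relVectors r' m n) :
      (v : (Fin (r' + 1) → ℤ) ⧸ AddSubgroup.closure (relVectors r' m n)) = 0 :=
    (QuotientAddGroup.eq_zero_iff v).mpr (AddSubgroup.subset_closure hv)
  have hsingle (k : Fin (r' + 1)) (a : ℕ) :
      a • (QuotientAddGroup.mk (Pi.single k 1) : _ ⧸ AddSubgroup.closure (relVectors r' m n)) =
        QuotientAddGroup.mk (Pi.single k (a : ℤ)) := by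
    rw [← QuotientAddGroup.mk_nsmul, ← Pi.single_smul', nsmul_one]
  refine ⟨?_, fun i => ?_, ?_⟩
  · rw [hsingle]; exact hmk (by simp [relVectors])
  · rw [hsingle, hsingle, ← sub_eq_zero, ← QuotientAddGroup.mk_sub]
    exact hmk (by simp [relVectors])
  · rw [hsingle]; exact hmk (by simp [relVectors])

namespace SatisfiesRelations

variable {G : Type*} [AddCommGroup G] {x : Fin (r' + 1) → G}

theorem linearCombination_eq_zero_of_mem_closure (hx : SatisfiesRelations m n x)
    {v : Fin (r' + 1) → ℤ} (hv : v ∈ AddSubgroup.closure (relVectors r' m n)) :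
    Fintype.linearCombination ℤ x v = 0 := by
  induction hv using AddSubgroup.closure_induction with
  | mem v hv =>
    simp only [relVectors, Set.union_singleton, Set.mem_insert_iff, Set.mem_union,
      Set.mem_singleton_iff, Set.mem_range] at hv
    rcases hv with rfl | rfl | ⟨i, rfl⟩ <;>
      simp [Fintype.linearCombination_apply_single, natCast_zsmul, hx.left, hx.right, hx.step]
  | zero => exact map_zero _
  | add v w _ _ hv hw => rw [map_add, hv, hw, add_zero]
  | neg v _ hv => rw [map_neg, hv, neg_zero]

theorem eq_zero_of_forall_mem_closure (hx : SatisfiesRelations m n x)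
    (h : ∀ v, v ∈ AddSubgroup.closure (relVectors r' m n)) : x = 0 := by
  funext k
  simpa using hx.linearCombination_eq_zero_of_mem_closure (h (Pi.single k 1))

theorem mul_nsmul_succ (hx : SatisfiesRelations m n x) (a : ℕ) (i : Fin r') :
    (a * m i.succ) • x i.succ = n i.castSucc • a • x i.castSucc := by
  rw [mul_nsmul, smul_comm, ← hx.step, smul_comm]

theorem exists_nsmul_eq_zero_coprime (hx : SatisfiesRelations m n x)
    (hmn : ∀ i j, i ≤ j → (m i).Coprime (n j)) (k : Fin (r' + 1)) :
    ∃ a : ℕ, a • x k = 0 ∧ ∀ j, k ≤ j → a.Coprime (n j) := by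
  induction k using Fin.induction with
  | zero => exact ⟨m 0, hx.left, fun j _ => hmn 0 j (Fin.zero_le j)⟩
  | succ i ih =>
    obtain ⟨a, ha, hcop⟩ := ih
    refine ⟨a * m i.succ, ?_, fun j hj => ?_⟩
    · rw [hx.mul_nsmul_succ, ha, smul_zero]
    · exact (hcop j (Fin.castSucc_lt_succ.le.trans hj)).mul_left (hmn _ _ hj)

theorem eq_zero_of_nsmul_eq_zero (hx : SatisfiesRelations m n x)
    (hmn : ∀ i j, i ≤ j → (m i).Coprime (n j)) {k : Fin (r' + 1)} {a : ℕ} (ha : a • x k = 0)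
    (hcop : ∀ j, k ≤ j → a.Coprime (n j)) : x k = 0 := by
  induction k using Fin.reverseInduction generalizing a with
  | last => exact eq_zero_of_nsmul_eq_zero_of_coprime (hcop _ le_rfl) ha hx.right
  | cast i ih =>
    have hsucc : x i.succ = 0 := by
      refine ih (a := a * m i.succ) (by rw [hx.mul_nsmul_succ, ha, smul_zero]) fun j hj => ?_
      exact (hcop j (Fin.castSucc_lt_succ.le.trans hj)).mul_left (hmn _ _ hj)
    refine eq_zero_of_nsmul_eq_zero_of_coprime (hcop _ le_rfl) ha ?_
    rw [hx.step, hsucc, smul_zero]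

theorem eq_zero (hx : SatisfiesRelations m n x) (hmn : ∀ i j, i ≤ j → (m i).Coprime (n j)) :
    x = 0 := by
  funext k
  obtain ⟨a, ha, hcop⟩ := hx.exists_nsmul_eq_zero_coprime hmn k
  exact hx.eq_zero_of_nsmul_eq_zero hmn ha hcop

end SatisfiesRelations

theorem Fin.Ico_succ_right_eq_insert_castSucc {i : Fin (r' + 1)} {t : Fin r'}
    (h : i ≤ t.castSucc) : Ico i t.succ = insert t.castSucc (Ico i t.castSucc) := by
  ext l
  simp only [mem_Ico, mem_insert, Fin.le_def, Fin.lt_def, Fin.ext_iff,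
    Fin.val_castSucc, Fin.val_succ] at h ⊢
  omega

theorem Fin.Ioc_castSucc_left_eq_insert_succ {j : Fin (r' + 1)} {t : Fin r'}
    (h : t.succ ≤ j) : Ioc t.castSucc j = insert t.succ (Ioc t.succ j) := by
  ext l
  simp only [mem_Ioc, mem_insert, Fin.le_def, Fin.lt_def, Fin.ext_iff,
    Fin.val_castSucc, Fin.val_succ] at h ⊢
  omega

/-- The solution of `n_k c_k = m_(k+1) c_(k+1)` for `i ≤ k < j`, extended by zero outside the
window `[i, j]`. -/
def windowFamily (m n : Fin (r' + 1) → ℕ) (i j k : Fin (r' + 1)) : ℕ :=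
  if i ≤ k ∧ k ≤ j then (∏ l ∈ Ico i k, n l) * ∏ l ∈ Ioc k j, m l else 0

section windowFamily

variable {i j : Fin (r' + 1)}

theorem windowFamily_self (hij : i ≤ j) : windowFamily m n i j i = ∏ l ∈ Ioc i j, m l := by
  simp [windowFamily, hij]

theorem mul_windowFamily_castSucc_eq {t : Fin r'} (hi : i ≤ t.castSucc) (hj : t.succ ≤ j) :
    n t.castSucc * windowFamily m n i j t.castSucc = m t.succ * windowFamily m n i j t.succ := by
  have hi' : i ≤ t.succ := hi.trans Fin.castSucc_lt_succ.le
  have hj' : t.castSucc ≤ j := Fin.castSucc_lt_succ.le.trans hj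
  rw [windowFamily, windowFamily, if_pos ⟨hi, hj'⟩, if_pos ⟨hi', hj⟩,
    Fin.Ico_succ_right_eq_insert_castSucc hi, Fin.Ioc_castSucc_left_eq_insert_succ hj,
    prod_insert (by simp), prod_insert (by simp)]
  ring

theorem dvd_mul_windowFamily_left {p : ℕ} (hi : p ∣ m i) {k : Fin (r' + 1)}
    (hk : ¬(i < k ∧ k ≤ j)) : p ∣ m k * windowFamily m n i j k := by
  by_cases hwin : i ≤ k ∧ k ≤ j
  · obtain rfl : i = k := le_antisymm hwin.1 (not_lt.mp fun h => hk ⟨h, hwin.2⟩)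
    exact dvd_mul_of_dvd_left hi _
  · simp [windowFamily, hwin]

theorem dvd_mul_windowFamily_right {p : ℕ} (hj : p ∣ n j) {k : Fin (r' + 1)}
    (hk : ¬(i ≤ k ∧ k < j)) : p ∣ n k * windowFamily m n i j k := by
  by_cases hwin : i ≤ k ∧ k ≤ j
  · obtain rfl : k = j := le_antisymm hwin.2 (not_lt.mp fun h => hk ⟨hwin.1, h⟩)
    exact dvd_mul_of_dvd_left hj _
  · simp [windowFamily, hwin]

theorem satisfiesRelations_windowFamily {p : ℕ} (hi : p ∣ m i) (hj : p ∣ n j) :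
    SatisfiesRelations m n fun k => (windowFamily m n i j k : ZMod p) := by
  refine ⟨?_, fun t => ?_, ?_⟩ <;> simp only [nsmul_eq_mul, ← Nat.cast_mul]
  · rw [ZMod.natCast_eq_zero_iff]
    exact dvd_mul_windowFamily_left hi fun h => not_lt_of_ge (Fin.zero_le i) h.1
  · by_cases hwin : i ≤ t.castSucc ∧ t.succ ≤ j
    · rw [mul_windowFamily_castSucc_eq hwin.1 hwin.2]
    · rw [(ZMod.natCast_eq_zero_iff _ p).mpr, (ZMod.natCast_eq_zero_iff _ p).mpr]
      · exact dvd_mul_windowFamily_left hi (by rwa [← Fin.le_castSucc_iff])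
      · exact dvd_mul_windowFamily_right hj (by rwa [Fin.castSucc_lt_iff_succ_le])
  · rw [ZMod.natCast_eq_zero_iff]
    exact dvd_mul_windowFamily_right hj fun h => not_lt_of_ge (Fin.le_last j) h.2

end windowFamily

theorem exists_satisfiesRelations_zmod_ne_zero {p : ℕ} (hp : p.Prime) {i j : Fin (r' + 1)}
    (hij : i ≤ j) (hi : p ∣ m i) (hj : p ∣ n j) :
    ∃ c : Fin (r' + 1) → ZMod p, SatisfiesRelations m n c ∧ c ≠ 0 := by
  set S := {l ∈ Icc i j | p ∣ m l}
  have hiS : i ∈ S := by simp [S, hij, hi]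
  set i' := S.max' ⟨i, hiS⟩
  obtain ⟨⟨hii', hi'j⟩, hi'⟩ : (i ≤ i' ∧ i' ≤ j) ∧ p ∣ m i' := by
    simpa [S] using S.max'_mem ⟨i, hiS⟩
  refine ⟨_, satisfiesRelations_windowFamily hi' hj, fun h => ?_⟩
  have hdvd := congrFun h i'
  simp only [windowFamily_self hi'j, Pi.zero_apply, ZMod.natCast_eq_zero_iff,
    hp.prime.dvd_finsetProd_iff, mem_Ioc] at hdvd
  obtain ⟨l, ⟨hl, hlj⟩, hpl⟩ := hdvd
  exact not_le_of_gt hl (S.le_max' l (by simp [S, hii'.trans hl.le, hlj, hpl]))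

theorem abelian_quotient_trivial_iff_gcd_general (r' : ℕ)
    (m n : Fin (r' + 1) → ℕ) :
    (∀ x : (Fin (r' + 1) → ℤ) ⧸ AddSubgroup.closure (relVectors r' m n),
        x = 0) ↔
      ∀ i j : Fin (r' + 1), i ≤ j → Nat.gcd (m i) (n j) = 1 := by
  constructor
  · intro htriv i j hij
    by_contra hmn
    obtain ⟨p, hp, hi, hj⟩ := Nat.Prime.not_coprime_iff_dvd.mp hmn
    obtain ⟨c, hc, hne⟩ := exists_satisfiesRelations_zmod_ne_zero hp hij hi hj
    exact hne <| hc.eq_zero_of_forall_mem_closure fun v =>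
      (QuotientAddGroup.eq_zero_iff v).mp (htriv _)
  · intro hmn x
    obtain ⟨v, rfl⟩ := QuotientAddGroup.mk_surjective x
    have hsingle (k : Fin (r' + 1)) :
        Pi.single k 1 ∈ AddSubgroup.closure (relVectors r' m n) :=
      (QuotientAddGroup.eq_zero_iff _).mp <|
        congrFun ((satisfiesRelations_mk_single m n).eq_zero hmn) k
    rw [QuotientAddGroup.eq_zero_iff, pi_eq_sum_univ' v]
    exact sum_mem fun k _ => zsmul_mem (hsingle k) _

/-- The quotient `ℤ^r / ⟨m_1 e_1, n_i e_i − m_{i+1} e_{i+1}, n_r e_r⟩` is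
trivial if and only if `gcd(m_i, n_j) = 1` for all `1 ≤ i ≤ j ≤ r`. -/
theorem abelian_quotient_trivial_iff_gcd (r' : ℕ)
    (m n : Fin (r' + 1) → ℕ)
    (hm : ∀ i, 0 < m i) (hn : ∀ j, 0 < n j) :
    (∀ x : (Fin (r' + 1) → ℤ) ⧸ AddSubgroup.closure (relVectors r' m n),
        x = 0) ↔
      ∀ i j : Fin (r' + 1), i ≤ j → Nat.gcd (m i) (n j) = 1 :=
  abelian_quotient_trivial_iff_gcd_general r' m n
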